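/- With F_n and F_∞(X) := ∫_0^1 c(t)·X(t)·X'(t) dt defined for 1-Lipschitz X vanishing at 1, there is a constant C such that sup_X |F_∞(X) − F_n(X)| ≤ C·2^{-2n} for all n; consequently F_∞ is continuous on the set X of 1-Lipschitz functions vanishing at 1 with the sup norm. -/

import Mathlib

/-!
The weight `c` is bounded by 6 and constant on each of the intervals `[t_m, s_m)` and
`[s_m, t_{m+1})`. Since `X (1) = 0` and `X` is `K`-Lipschitz, `|X t| ≤ K (1 - t)` and `|X'| ≤ K`, so
the tail `∫_{t_n}^1 c X X'` is at most `∫_{t_n}^1 6 K² (1 - t) dt = 3 K² 4^{-n}`. Because `X` is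
absolutely continuous, `X X' = (X²)'/2` a.e., so on `[0, t_n]`, where `c` is a finite step function,
`F_n X` is a finite combination of the values `X(t_m)²` and `X(s_m)²`, hence continuous for uniform
convergence. `F_∞` is then a uniform limit of continuous functionals.
-/

open MeasureTheory Set Filter

noncomputable def tn (n : ℕ) : ℝ := 1 - 1 / 2 ^ n
noncomputable def sn (n : ℕ) : ℝ := (tn n + 3 * tn (n + 1)) / 4
noncomputable def c (x : ℝ) : ℝ :=
  ∑' n : ℕ, ((Ico (tn n) (sn n)).indicator (fun _ => (1 : ℝ)) x
    + 6 * (Ico (sn n) (tn (n + 1))).indicator (fun _ => (1 : ℝ)) x)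
noncomputable def Finfty (X : ℝ → ℝ) : ℝ := ∫ x in (0 : ℝ)..1, c x * X x * deriv X x
noncomputable def Fn (n : ℕ) (X : ℝ → ℝ) : ℝ :=
  ∫ x in (0 : ℝ)..(tn n), c x * X x * deriv X x

open scoped NNReal Topology Interval UniformConvergence
open UniformFun

lemma one_sub_tn (n : ℕ) : 1 - tn n = (1 / 2) ^ n := by
  simp [tn]

lemma tn_zero : tn 0 = 0 := by simp [tn]

lemma tn_strictMono : StrictMono tn := fun a b hab => by
  have := pow_lt_pow_right_of_lt_one₀ (by norm_num : (0 : ℝ) < 1 / 2) (by norm_num) hab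
  linarith [one_sub_tn a, one_sub_tn b]

lemma tn_nonneg (n : ℕ) : 0 ≤ tn n := tn_zero ▸ tn_strictMono.monotone n.zero_le

lemma tn_lt_one (n : ℕ) : tn n < 1 := by
  have : (0 : ℝ) < (1 / 2) ^ n := by positivity
  linarith [one_sub_tn n]

lemma tn_lt_sn (n : ℕ) : tn n < sn n := by
  have := tn_strictMono n.lt_succ_self
  unfold sn; linarith

lemma sn_lt_tn_succ (n : ℕ) : sn n < tn (n + 1) := by
  have := tn_strictMono n.lt_succ_self
  unfold sn; linarith

lemma exists_mem_Ico_tn {x : ℝ} (hx : x ∈ Ico 0 1) :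
    ∃ m, x ∈ Ico (tn m) (tn (m + 1)) := by
  obtain ⟨m, hlt, hle⟩ := exists_nat_pow_near_of_lt_one (x := 1 - x) (y := 1 / 2)
    (by linarith [hx.2]) (by linarith [hx.1]) (by norm_num) (by norm_num)
  exact ⟨m, by linarith [one_sub_tn m], by linarith [one_sub_tn (m + 1)]⟩

lemma one_sub_tn_sq (n : ℕ) : (1 - tn n) ^ 2 = (2 : ℝ) ^ (-(2 * n : ℤ)) := by
  rw [one_sub_tn, ← pow_mul, mul_comm, one_div, inv_pow, ← zpow_natCast, ← zpow_neg]
  push_cast; rfl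

noncomputable def cTerm (n : ℕ) (x : ℝ) : ℝ :=
  (Ico (tn n) (sn n)).indicator (fun _ => 1) x
    + 6 * (Ico (sn n) (tn (n + 1))).indicator (fun _ => 1) x

lemma cTerm_eq_zero_of_notMem {n : ℕ} {x : ℝ} (hx : x ∉ Ico (tn n) (tn (n + 1))) :
    cTerm n x = 0 := by
  have h₁ : x ∉ Ico (tn n) (sn n) := fun h => hx ⟨h.1, h.2.trans (sn_lt_tn_succ n)⟩
  have h₂ : x ∉ Ico (sn n) (tn (n + 1)) := fun h => hx ⟨(tn_lt_sn n).le.trans h.1, h.2⟩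
  simp [cTerm, h₁, h₂]

lemma c_eq_cTerm {m : ℕ} {x : ℝ} (hx : x ∈ Ico (tn m) (tn (m + 1))) : c x = cTerm m x := by
  refine tsum_eq_single m fun n hnm => cTerm_eq_zero_of_notMem fun hn => hnm ?_
  rcases lt_trichotomy n m with h | h | h
  · linarith [hn.2, hx.1, tn_strictMono.monotone (Nat.succ_le_of_lt h)]
  · exact h
  · linarith [hn.1, hx.2, tn_strictMono.monotone (Nat.succ_le_of_lt h)]

lemma c_eq_zero_of_notMem {x : ℝ} (hx : x ∉ Ico 0 1) : c x = 0 := by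
  have h (n : ℕ) : cTerm n x = 0 := cTerm_eq_zero_of_notMem fun h =>
    hx ⟨(tn_nonneg n).trans h.1, h.2.trans (tn_lt_one _)⟩
  exact (tsum_congr h).trans tsum_zero

lemma eqOn_c_one (m : ℕ) : EqOn c (fun _ => 1) (Ico (tn m) (sn m)) := fun x hx => by
  have h₂ : x ∉ Ico (sn m) (tn (m + 1)) := fun h => (hx.2.trans_le h.1).false
  rw [c_eq_cTerm ⟨hx.1, hx.2.trans (sn_lt_tn_succ m)⟩]
  simp [cTerm, hx, h₂]

lemma eqOn_c_six (m : ℕ) : EqOn c (fun _ => 6) (Ico (sn m) (tn (m + 1))) := fun x hx => by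
  have h₁ : x ∉ Ico (tn m) (sn m) := fun h => (h.2.trans_le hx.1).false
  rw [c_eq_cTerm ⟨(tn_lt_sn m).le.trans hx.1, hx.2⟩]
  simp [cTerm, hx, h₁]

lemma abs_c_le_six (x : ℝ) : |c x| ≤ 6 := by
  by_cases hx : x ∈ Ico 0 1
  · obtain ⟨m, hm⟩ := exists_mem_Ico_tn hx
    rcases lt_or_ge x (sn m) with h | h
    · rw [eqOn_c_one m ⟨hm.1, h⟩]; norm_num
    · rw [eqOn_c_six m ⟨h, hm.2⟩]; norm_num
  · rw [c_eq_zero_of_notMem hx]; norm_num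

lemma measurable_c : Measurable c :=
  Measurable.tsum fun _ => by fun_prop (disch := measurability)

section Integrand

variable {X : ℝ → ℝ} {K : ℝ≥0}

lemma integral_mul_deriv_of_lipschitz (hX : LipschitzWith K X) (p q : ℝ) :
    ∫ x in p..q, X x * deriv X x = (X q ^ 2 - X p ^ 2) / 2 := by
  have hac : AbsolutelyContinuousOnInterval X p q :=
    hX.lipschitzOnWith.absolutelyContinuousOnInterval
  have hderiv : ∀ᵐ x, x ∈ Ι p q → X x * deriv X x = deriv (X * X) x / 2 := by
    filter_upwards [hX.ae_differentiableAt (μ := volume)] with x hx _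
    rw [deriv_mul hx hx]; ring
  rw [intervalIntegral.integral_congr_ae hderiv, intervalIntegral.integral_div,
    (hac.mul hac).integral_deriv_eq_sub]
  simp only [Pi.mul_apply]; ring

lemma intervalIntegrable_c_mul_mul_deriv (hX : LipschitzWith K X) (a b : ℝ) :
    IntervalIntegrable (fun x => c x * X x * deriv X x) volume a b := by
  rw [intervalIntegrable_iff]
  exact (((hX.continuous.intervalIntegrable a b).def'.bdd_mul measurable_c.aestronglyMeasurable
    (ae_of_all _ abs_c_le_six)).mul_bdd (measurable_deriv X).aestronglyMeasurable
    (ae_of_all _ fun _ => norm_deriv_le_of_lipschitz hX))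

lemma integral_c_mul_mul_deriv_of_eqOn (hX : LipschitzWith K X) {p q k : ℝ} (hpq : p ≤ q)
    (hc : EqOn c (fun _ => k) (Ico p q)) :
    ∫ x in p..q, c x * X x * deriv X x = k * ((X q ^ 2 - X p ^ 2) / 2) := by
  rw [intervalIntegral.integral_congr_Ioo_of_le hpq (g := fun x => k * (X x * deriv X x))
    fun x hx => by simp only [hc (Ioo_subset_Ico_self hx)]; ring,
    intervalIntegral.integral_const_mul, integral_mul_deriv_of_lipschitz hX]

lemma Fn_eq_sum (hX : LipschitzWith K X) (n : ℕ) :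
    Fn n X = ∑ m ∈ Finset.range n,
      ((X (sn m) ^ 2 - X (tn m) ^ 2) / 2 + 3 * (X (tn (m + 1)) ^ 2 - X (sn m) ^ 2)) := by
  have hint := intervalIntegrable_c_mul_mul_deriv hX
  rw [Fn, ← tn_zero, ← intervalIntegral.sum_integral_adjacent_intervals fun k _ => hint _ _]
  refine Finset.sum_congr rfl fun m _ => ?_
  rw [← intervalIntegral.integral_add_adjacent_intervals (hint _ (sn m)) (hint _ _),
    integral_c_mul_mul_deriv_of_eqOn hX (tn_lt_sn m).le (eqOn_c_one m),
    integral_c_mul_mul_deriv_of_eqOn hX (sn_lt_tn_succ m).le (eqOn_c_six m)]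
  ring

lemma abs_le_of_lipschitz_of_eq_zero (hX : LipschitzWith K X) (h1 : X 1 = 0) {x : ℝ}
    (hx : x ≤ 1) : |X x| ≤ K * (1 - x) := by
  simpa [h1, Real.dist_eq, abs_of_nonpos (sub_nonpos.2 hx)] using hX.dist_le_mul x 1

lemma abs_Finfty_sub_Fn_le (hX : LipschitzWith K X) (h1 : X 1 = 0) (n : ℕ) :
    |Finfty X - Fn n X| ≤ 3 * K ^ 2 * (1 - tn n) ^ 2 := by
  have hint := intervalIntegrable_c_mul_mul_deriv hX
  have htail : ∀ x ∈ Ioc (tn n) 1, ‖c x * X x * deriv X x‖ ≤ 6 * K ^ 2 * (1 - x) := by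
    intro x hx
    have hX' : |X x| ≤ K * (1 - x) := abs_le_of_lipschitz_of_eq_zero hX h1 hx.2
    have hd : |deriv X x| ≤ K := norm_deriv_le_of_lipschitz hX
    have hx1 : 0 ≤ 1 - x := by linarith [hx.2]
    rw [Real.norm_eq_abs, abs_mul, abs_mul]
    calc |c x| * |X x| * |deriv X x| ≤ 6 * (K * (1 - x)) * K := by gcongr; exact abs_c_le_six x
      _ = 6 * K ^ 2 * (1 - x) := by ring
  have hval : ∫ x in tn n..1, 6 * (K : ℝ) ^ 2 * (1 - x) = 3 * K ^ 2 * (1 - tn n) ^ 2 := by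
    rw [intervalIntegral.integral_const_mul, intervalIntegral.integral_comp_sub_left (fun x => x),
      integral_id]
    ring
  rw [Finfty, Fn, intervalIntegral.integral_interval_sub_left (hint _ _) (hint _ _), ← hval,
    ← Real.norm_eq_abs]
  exact intervalIntegral.norm_integral_le_of_norm_le (tn_lt_one n).le
    (ae_of_all _ htail) ((by fun_prop : Continuous _).intervalIntegrable _ _)

end Integrand

section Continuity

variable (K : ℝ≥0)

lemma continuousOn_Fn (n : ℕ) :
    ContinuousOn (fun X : ℝ →ᵤ ℝ => Fn n (toFun X)) {X | LipschitzWith K (toFun X)} := by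
  have hev (t : ℝ) : Continuous fun X : ℝ →ᵤ ℝ => toFun X t :=
    (UniformFun.uniformContinuous_eval ℝ t).continuous
  refine ContinuousOn.congr (Continuous.continuousOn ?_) fun X hX => Fn_eq_sum hX n
  fun_prop

lemma tendstoUniformlyOn_Fn_Finfty :
    TendstoUniformlyOn (fun n (X : ℝ →ᵤ ℝ) => Fn n (toFun X)) (fun X => Finfty (toFun X)) atTop
      {X | LipschitzWith K (toFun X) ∧ toFun X 1 = 0} := by
  have hlim : Tendsto (fun n => 3 * (K : ℝ) ^ 2 * (1 - tn n) ^ 2) atTop (𝓝 0) := by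
    simpa [one_sub_tn] using tendsto_const_nhds.mul
      ((tendsto_pow_atTop_nhds_zero_of_lt_one (by norm_num : (0 : ℝ) ≤ 1 / 2) (by norm_num)).pow 2)
  refine Metric.tendstoUniformlyOn_iff.2 fun ε hε => ?_
  filter_upwards [hlim.eventually (gt_mem_nhds hε)] with n hn X hX
  rw [Real.dist_eq]
  exact (abs_Finfty_sub_Fn_le hX.1 hX.2 n).trans_lt hn

lemma continuousOn_Finfty :
    ContinuousOn (fun X : ℝ →ᵤ ℝ => Finfty (toFun X))
      {X | LipschitzWith K (toFun X) ∧ toFun X 1 = 0} :=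
  (tendstoUniformlyOn_Fn_Finfty K).continuousOn <| Frequently.of_forall fun n =>
    (continuousOn_Fn K n).mono fun _ hX => hX.1

end Continuity

theorem stmt11 :
    (∃ C : ℝ, ∀ X : ℝ → ℝ, LipschitzWith 1 X → X 1 = 0 → ∀ n : ℕ,
      |Finfty X - Fn n X| ≤ C * (2 : ℝ) ^ (-(2 * n : ℤ))) ∧
    (∀ X : ℝ → ℝ, LipschitzWith 1 X → X 1 = 0 →
      ∀ Xk : ℕ → ℝ → ℝ, (∀ k, LipschitzWith 1 (Xk k) ∧ Xk k 1 = 0) →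
        TendstoUniformly Xk X atTop →
        Tendsto (fun k => Finfty (Xk k)) atTop (nhds (Finfty X))) := by
  refine ⟨⟨3, fun X hX h1 n => ?_⟩, fun X hX h1 Xk hXk hunif => ?_⟩
  · simpa [one_sub_tn_sq] using abs_Finfty_sub_Fn_le hX h1 n
  · have hlim : Tendsto (fun k => ofFun (Xk k)) atTop
        (𝓝[{X | LipschitzWith 1 (toFun X) ∧ toFun X 1 = 0}] (ofFun X)) :=
      tendsto_nhdsWithin_iff.2 ⟨UniformFun.tendsto_iff_tendstoUniformly.2 hunif,
        Eventually.of_forall hXk⟩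
    exact ((continuousOn_Finfty 1).continuousWithinAt ⟨hX, h1⟩).tendsto.comp hlim
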